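/- Assume the sharpness condition and dist(0, X^*) > 0, and let (x_k) be a HOPP sequence. Then for every k ≥ 0: dist(x_k, X^*)/dist(0, X^*) ≤ (σ₀(p+1)/(M · dist(0, X^*)^{p−1}))^{1/p} · q^{(p+1)^k}, where q := M^{1/p} dist(x_0, X^*) / (σ₀(p+1) dist(0, X^*))^{1/p}. -/
import Mathlib


open scoped BigOperators RealInnerProductSpace

noncomputable section

/-- The phase-retrieval objective `f(x) = ‖(⟨a_1,x⟩² − z_1, …, ⟨a_m,x⟩² − z_m)‖`
(Euclidean norm), i.e. `f(x) = ‖xᵀQx − z‖` with `Q_i = a_i a_iᵀ`. -/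
def fPR {n m : ℕ} (a : Fin m → EuclideanSpace ℝ (Fin n)) (z : Fin m → ℝ)
    (x : EuclideanSpace ℝ (Fin n)) : ℝ :=
  ‖(EuclideanSpace.equiv (Fin m) ℝ).symm fun i => ⟪a i, x⟫ ^ 2 - z i‖

/-- superlinear (order `p+1`) convergence of the HOPP method on phase
retrieval under the sharpness condition. -/
theorem stmt19 {n m : ℕ} (hn : 1 ≤ n) (hm : 1 ≤ m)
    (a : Fin m → EuclideanSpace ℝ (Fin n)) (z : Fin m → ℝ)
    (M : ℝ) (hM : 0 < M) (p : ℕ) (hp : 1 ≤ p)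
    (Xs : Set (EuclideanSpace ℝ (Fin n)))
    (hXs : Xs = {w | fPR a z w = ⨅ v, fPR a z v}) (hXne : Xs.Nonempty)
    (σ₀ : ℝ) (hσ₀ : 0 < σ₀)
    (hsharp : ∀ w : EuclideanSpace ℝ (Fin n),
      σ₀ * Metric.infDist 0 Xs * Metric.infDist w Xs ≤ fPR a z w - ⨅ v, fPR a z v)
    (hd0 : 0 < Metric.infDist (0 : EuclideanSpace ℝ (Fin n)) Xs)
    (x : ℕ → EuclideanSpace ℝ (Fin n))
    (hx : ∀ (k : ℕ) (w : EuclideanSpace ℝ (Fin n)),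
      fPR a z (x (k + 1)) + M / ((p : ℝ) + 1) * ‖x (k + 1) - x k‖ ^ (p + 1) ≤
        fPR a z w + M / ((p : ℝ) + 1) * ‖w - x k‖ ^ (p + 1))
    (q : ℝ)
    (hq : q = M ^ ((1 : ℝ) / p) * Metric.infDist (x 0) Xs /
      (σ₀ * ((p : ℝ) + 1) * Metric.infDist (0 : EuclideanSpace ℝ (Fin n)) Xs) ^
        ((1 : ℝ) / p)) :
    ∀ k : ℕ,
      Metric.infDist (x k) Xs / Metric.infDist (0 : EuclideanSpace ℝ (Fin n)) Xs ≤
        (σ₀ * ((p : ℝ) + 1) /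
            (M * Metric.infDist (0 : EuclideanSpace ℝ (Fin n)) Xs ^ (p - 1))) ^
          ((1 : ℝ) / p) * q ^ ((p + 1) ^ k) := by
  have hp0 : (0 : ℝ) < p := by exact_mod_cast Nat.lt_of_lt_of_le Nat.zero_lt_one hp
  have hp1 : (0 : ℝ) < (p : ℝ) + 1 := by linarith
  set D := Metric.infDist (0 : EuclideanSpace ℝ (Fin n)) Xs with hD
  set fs := ⨅ v, fPR a z v with hfs
  have hbdd : BddBelow (Set.range (fPR a z)) := by
    refine ⟨0, ?_⟩
    rintro _ ⟨v, rfl⟩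
    exact norm_nonneg _
  have hfs_le : ∀ w, fs ≤ fPR a z w := fun w => ciInf_le hbdd w
  have hcont : Continuous (fPR a z) := by
    apply Continuous.norm
    exact ((EuclideanSpace.equiv (Fin m) ℝ).symm.continuous).comp
      (continuous_pi fun i =>
        (((innerSL ℝ (a i)).continuous).pow 2).sub continuous_const)
  have hclosed : IsClosed Xs := by
    rw [hXs]
    exact isClosed_eq hcont continuous_const
  -- abbreviation for distances
  set d : ℕ → ℝ := fun k => Metric.infDist (x k) Xs with hdd
  have hd_nonneg : ∀ k, 0 ≤ d k := fun k => Metric.infDist_nonneg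
  -- key recursion
  have key : ∀ k, σ₀ * D * d (k + 1) ≤ M / ((p : ℝ) + 1) * d k ^ (p + 1) := by
    intro k
    obtain ⟨w, hw, hdw⟩ := hclosed.exists_infDist_eq_dist hXne (x k)
    have hfw : fPR a z w = fs := by
      rw [hXs] at hw
      exact hw
    have hnw : ‖w - x k‖ = d k := by
      rw [hdd]
      simp only
      rw [hdw, dist_eq_norm, ← norm_neg]
      congr 1
      abel
    have h1 := hx k w
    rw [hnw, hfw] at h1
    have h2 := hsharp (x (k + 1))
    have h3 : (0 : ℝ) ≤ M / ((p : ℝ) + 1) * ‖x (k + 1) - x k‖ ^ (p + 1) :=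
      mul_nonneg (le_of_lt (div_pos hM hp1)) (pow_nonneg (norm_nonneg _) _)
    linarith
  -- constants
  set c : ℝ := σ₀ * ((p : ℝ) + 1) * D with hc
  have hcpos : 0 < c := mul_pos (mul_pos hσ₀ hp1) hd0
  set C : ℝ := M / c with hC
  have hCpos : 0 < C := div_pos hM hcpos
  have hCr : (0 : ℝ) < C ^ ((1 : ℝ) / p) := Real.rpow_pos_of_pos hCpos _
  -- recursion in normalized form
  have rec2 : ∀ k, d (k + 1) ≤ C * d k ^ (p + 1) := by
    intro k
    have hk := key k
    rw [hC, hc]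
    rw [div_mul_eq_mul_div, le_div_iff₀ hcpos]
    calc d (k + 1) * (σ₀ * ((p : ℝ) + 1) * D)
        = (σ₀ * D * d (k + 1)) * ((p : ℝ) + 1) := by ring
      _ ≤ (M / ((p : ℝ) + 1) * d k ^ (p + 1)) * ((p : ℝ) + 1) := by
          exact mul_le_mul_of_nonneg_right hk (le_of_lt hp1)
      _ = M * d k ^ (p + 1) := by field_simp
  have hq' : q = C ^ ((1 : ℝ) / p) * d 0 := by
    have hd00 : d 0 = Metric.infDist (x 0) Xs := rfl
    rw [hq, hC, Real.div_rpow (le_of_lt hM) (le_of_lt hcpos), hd00]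
    ring
  have hqnn : 0 ≤ q := by
    rw [hq']
    exact mul_nonneg (le_of_lt hCr) (hd_nonneg 0)
  -- `C^(1/p) * C = (C^(1/p))^(p+1)`
  have hCmul : (C ^ ((1 : ℝ) / p)) ^ (p + 1) = C ^ ((1 : ℝ) / p) * C := by
    rw [← Real.rpow_natCast (C ^ ((1 : ℝ) / p)) (p + 1), ← Real.rpow_mul (le_of_lt hCpos)]
    have : (1 : ℝ) / p * ((p : ℕ) + 1 : ℕ) = 1 / p + 1 := by
      push_cast
      field_simp
      ring
    rw [this, Real.rpow_add hCpos, Real.rpow_one]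
  -- main induction
  have main : ∀ k, C ^ ((1 : ℝ) / p) * d k ≤ q ^ ((p + 1) ^ k) := by
    intro k
    induction k with
    | zero => simp [hq']
    | succ k ih =>
      have h1 : C ^ ((1 : ℝ) / p) * d (k + 1) ≤ (C ^ ((1 : ℝ) / p) * d k) ^ (p + 1) := by
        rw [mul_pow, hCmul]
        calc C ^ ((1 : ℝ) / p) * d (k + 1)
            ≤ C ^ ((1 : ℝ) / p) * (C * d k ^ (p + 1)) :=
              mul_le_mul_of_nonneg_left (rec2 k) (le_of_lt hCr)
          _ = C ^ ((1 : ℝ) / p) * C * d k ^ (p + 1) := by ring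
      have h2 : (C ^ ((1 : ℝ) / p) * d k) ^ (p + 1) ≤ (q ^ ((p + 1) ^ k)) ^ (p + 1) :=
        pow_le_pow_left₀ (mul_nonneg (le_of_lt hCr) (hd_nonneg k)) ih _
      calc C ^ ((1 : ℝ) / p) * d (k + 1) ≤ (q ^ ((p + 1) ^ k)) ^ (p + 1) := le_trans h1 h2
        _ = q ^ ((p + 1) ^ (k + 1)) := by rw [← pow_mul, pow_succ]
  -- rewrite the target coefficient
  have hDpow : D ^ p = D * D ^ (p - 1) := by
    nth_rewrite 1 [show p = 1 + (p - 1) by omega]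
    rw [pow_add, pow_one]
  have hDp : ((D : ℝ) ^ p) ^ ((1 : ℝ) / p) = D := by
    rw [← Real.rpow_natCast D p, ← Real.rpow_mul (le_of_lt hd0)]
    rw [mul_one_div, div_self (ne_of_gt hp0), Real.rpow_one]
  have hcoef : (σ₀ * ((p : ℝ) + 1) / (M * D ^ (p - 1))) ^ ((1 : ℝ) / p)
      = 1 / (C ^ ((1 : ℝ) / p) * D) := by
    have h1 : σ₀ * ((p : ℝ) + 1) / (M * D ^ (p - 1)) = 1 / (C * D ^ p) := by
      rw [hC, hc, hDpow]
      field_simp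
    rw [h1, Real.div_rpow (by norm_num) (le_of_lt (mul_pos hCpos (pow_pos hd0 p))),
      Real.one_rpow, Real.mul_rpow (le_of_lt hCpos) (le_of_lt (pow_pos hd0 p)), hDp]
  intro k
  rw [hcoef]
  have hfin := main k
  rw [div_le_iff₀ hd0, one_div]
  show d k ≤ (C ^ ((1 : ℝ) / p) * D)⁻¹ * q ^ ((p + 1) ^ k) * D
  calc d k = (C ^ ((1 : ℝ) / p) * d k) * (C ^ ((1 : ℝ) / p) * D)⁻¹ * D := by
        field_simp
    _ ≤ q ^ ((p + 1) ^ k) * (C ^ ((1 : ℝ) / p) * D)⁻¹ * D := by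
        apply mul_le_mul_of_nonneg_right _ (le_of_lt hd0)
        exact mul_le_mul_of_nonneg_right hfin
          (inv_nonneg.mpr (le_of_lt (mul_pos hCr hd0)))
    _ = (C ^ ((1 : ℝ) / p) * D)⁻¹ * q ^ ((p + 1) ^ k) * D := by ring
  

end
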